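/- arXiv:math/0402011 — 4 statements merged into one kernel-verified Lean document; each statement's English description precedes it below -/
import Mathlib

section
/- Let 1/2 < α < 1 and 0 ≤ κ < α − 1/2. Then ∫_{ℝ²} A_{2,κ}(ω^α_+(x)) dx < ∞; that is, ω^α_+ belongs to the Zygmund space L²(log L)^κ(ℝ²). -/
open MeasureTheory Real Metric Filter
open scoped ENNReal Topology

/-- The plane `ℝ²` with the Euclidean norm. -/
noncomputable abbrev E2 : Type := EuclideanSpace ℝ (Fin 2)

/-- The vorticity `ω^α_+`, equal to `1/(|x| |log|x||^α)` on the upper half-disk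
`B⁺(0;1/3)` and zero elsewhere. -/
noncomputable def omegaPlus (α : ℝ) (x : E2) : ℝ :=
  if ‖x‖ < 1/3 ∧ 0 < x 1 then 1 / (‖x‖ * |Real.log ‖x‖| ^ α) else 0

/-- The Young function `A_{p,a}(s) = (s (log(2+s))^a)^p`. -/
noncomputable def Apa (p a s : ℝ) : ℝ := (s * Real.log (2 + s) ^ a) ^ p

/-!
Where `ω^α_+` is nonzero, `|x| = r < 1/3` and `L = -log r > 1`, so `ω^α_+ ≤ 1/r` and
`log (2 + ω^α_+) ≤ 2L`. Hence `A_{2,κ}(ω^α_+) ≤ 4^κ / (r² L^{2(α-κ)})` there, and in polar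
coordinates this radial majorant integrates to a constant times `∫₀^{1/3} dr / (r L^{2(α-κ)})`,
which the substitution `r = e^u` turns into `∫ |u|^{-2(α-κ)} du` over a half-line: finite because
`2(α-κ) > 1`.
-/

open Set

lemma integrableOn_inv_mul_neg_log_rpow {β c : ℝ} (hβ : 1 < β) (hc0 : 0 < c) (hc1 : c < 1) :
    IntegrableOn (fun y : ℝ => (y * (-log y) ^ β)⁻¹) (Ioo 0 c) := by
  have hpow : IntegrableOn (fun u : ℝ => (-u) ^ (-β)) (Iio (log c)) :=
    (integrableOn_Ioi_rpow_of_lt (by linarith) (neg_pos.2 (log_neg hc0 hc1))).comp_neg_Iio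
  rw [← exp_log hc0, ← image_exp_Iio, integrableOn_image_iff_integrableOn_abs_deriv_smul
    measurableSet_Iio (fun u _ => (hasDerivAt_exp u).hasDerivWithinAt) exp_injective.injOn]
  refine hpow.congr_fun (fun u hu => ?_) measurableSet_Iio
  have hu : 0 < -u := neg_pos.2 (hu.trans (log_neg hc0 hc1))
  dsimp only
  rw [log_exp, abs_of_pos (exp_pos u), smul_eq_mul, rpow_neg hu.le, mul_inv, ← mul_assoc,
    mul_inv_cancel₀ (exp_pos u).ne', one_mul]

lemma integrableOn_ball_div_sq_mul_neg_log_rpow {E : Type*} [NormedAddCommGroup E]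
    [NormedSpace ℝ E] [MeasurableSpace E] [BorelSpace E] (hE : Module.finrank ℝ E = 2)
    (μ : Measure E) [μ.IsAddHaarMeasure] {β c : ℝ} (hβ : 1 < β) (hc0 : 0 < c) (hc1 : c < 1)
    (C : ℝ) : IntegrableOn (fun x : E => C / (‖x‖ ^ 2 * (-log ‖x‖) ^ β)) (ball 0 c) μ := by
  have : Nontrivial E := Module.nontrivial_of_finrank_eq_succ hE
  have : FiniteDimensional ℝ E := Module.finite_of_finrank_pos (by omega)
  rw [integrableOn_fun_norm_addHaar μ (f := fun y => C / (y ^ 2 * (-log y) ^ β)), hE]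
  refine IntegrableOn.congr_fun ((integrableOn_inv_mul_neg_log_rpow hβ hc0 hc1).const_mul C)
    (fun y hy => ?_) measurableSet_Ioo
  have : 0 < y := hy.1
  simp only [Nat.reduceSub, pow_one, smul_eq_mul]
  field_simp

lemma log_two_add_le_two_mul_neg_log {r s : ℝ} (hr0 : 0 < r) (hr : r ≤ 1 / 2) (hs0 : 0 ≤ s)
    (hs : s ≤ r⁻¹) : log (2 + s) ≤ 2 * -log r := by
  have h2r : 2 ≤ r⁻¹ := by rw [le_inv_comm₀ two_pos hr0]; linarith
  calc log (2 + s) ≤ log (r⁻¹ ^ 2) := log_le_log (by positivity) (by nlinarith)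
    _ = 2 * -log r := by rw [log_pow, log_inv]; push_cast; ring

lemma Apa_two_le_of_le_exp_neg_one {α κ r : ℝ} (hα : 0 ≤ α) (hκ : 0 ≤ κ) (hr0 : 0 < r)
    (hr : r ≤ exp (-1)) :
    Apa 2 κ (1 / (r * (-log r) ^ α)) ≤ 4 ^ κ / (r ^ 2 * (-log r) ^ (2 * (α - κ))) := by
  set L := -log r with hL
  have hL1 : 1 ≤ L := by rw [hL, le_neg, ← log_exp (-1)]; exact log_le_log hr0 hr
  have hL0 : 0 < L := by linarith
  have hr2 : r ≤ 1 / 2 := by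
    refine hr.trans ?_
    rw [exp_neg, one_div]
    exact inv_anti₀ two_pos (by linarith [add_one_le_exp 1])
  set s := 1 / (r * L ^ α) with hsdef
  have hs0 : 0 ≤ s := by positivity
  have hs : s ≤ r⁻¹ := by
    rw [hsdef, one_div, mul_inv]
    exact mul_le_of_le_one_right (inv_nonneg.2 hr0.le) (inv_le_one_of_one_le₀ (one_le_rpow hL1 hα))
  calc Apa 2 κ s ≤ (s * (2 * L) ^ κ) ^ (2 : ℝ) := by
        have hlog0 : 0 ≤ log (2 + s) := log_nonneg (by linarith)
        have hlog : log (2 + s) ≤ 2 * L := log_two_add_le_two_mul_neg_log hr0 hr2 hs0 hs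
        unfold Apa
        gcongr
    _ = 4 ^ κ / (r ^ 2 * L ^ (2 * (α - κ))) := by
        have h4 : (4 : ℝ) ^ κ = 2 ^ κ * 2 ^ κ := by
          rw [← mul_rpow zero_le_two zero_le_two]; norm_num
        have hLpow : L ^ (2 * (α - κ)) = L ^ α * L ^ α / (L ^ κ * L ^ κ) := by
          rw [← rpow_add hL0, ← rpow_add hL0, ← rpow_sub hL0]; ring_nf
        have : 0 < L ^ κ := rpow_pos_of_pos hL0 κ
        have : 0 < L ^ α := rpow_pos_of_pos hL0 α
        rw [hsdef, mul_rpow zero_le_two hL0.le, h4, hLpow, rpow_two]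
        field_simp

lemma Apa_omegaPlus_le {α κ : ℝ} (hα : 0 ≤ α) (hκ : 0 ≤ κ) (x : E2) :
    Apa 2 κ (omegaPlus α x) ≤
      (ball (0 : E2) (1 / 3)).indicator
        (fun y => 4 ^ κ / (‖y‖ ^ 2 * (-log ‖y‖) ^ (2 * (α - κ)))) x := by
  unfold omegaPlus
  split_ifs with hx
  · obtain ⟨hr, hx1⟩ := hx
    have hr0 : 0 < ‖x‖ := norm_pos_iff.2 (by rintro rfl; simp at hx1)
    have hlog : log ‖x‖ < 0 := log_neg hr0 (by linarith)
    rw [indicator_of_mem (mem_ball_zero_iff.2 hr), abs_of_neg hlog]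
    refine Apa_two_le_of_le_exp_neg_one hα hκ hr0 (hr.le.trans ?_)
    rw [exp_neg, one_div]
    exact inv_anti₀ (exp_pos 1) (exp_one_lt_d9.le.trans (by norm_num))
  · have hApa0 : Apa 2 κ 0 = 0 := by simp [Apa]
    rw [hApa0]
    refine indicator_nonneg (fun y hy => ?_) x
    have : 0 ≤ -log ‖y‖ :=
      neg_nonneg.2 (log_nonpos (norm_nonneg y) (by linarith [mem_ball_zero_iff.1 hy]))
    positivity

theorem omegaPlus_in_Zygmund_general (α κ : ℝ)
    (hκ0 : 0 ≤ κ) (hκ : κ < α - 1/2) :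
    ∫⁻ x : E2, ENNReal.ofReal (Apa 2 κ (omegaPlus α x)) < ⊤ := by
  have hmajorant := (integrableOn_ball_div_sq_mul_neg_log_rpow finrank_euclideanSpace_fin
    volume (by linarith : 1 < 2 * (α - κ)) (by norm_num : (0 : ℝ) < 1 / 3) (by norm_num)
    (4 ^ κ)).integrable_indicator measurableSet_ball
  calc ∫⁻ x : E2, ENNReal.ofReal (Apa 2 κ (omegaPlus α x))
      ≤ ∫⁻ x : E2, ENNReal.ofReal ((ball (0 : E2) (1 / 3)).indicator
          (fun y => 4 ^ κ / (‖y‖ ^ 2 * (-log ‖y‖) ^ (2 * (α - κ)))) x) :=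
        lintegral_mono fun x => ENNReal.ofReal_le_ofReal (Apa_omegaPlus_le (by linarith) hκ0 x)
    _ < ⊤ := hmajorant.lintegral_lt_top

/-- for `1/2 < α < 1` and `0 ≤ κ < α - 1/2`, the function `ω^α_+`
belongs to the Zygmund space `L²(log L)^κ(ℝ²)`, i.e. `∫ A_{2,κ}(ω^α_+) < ∞`. -/
theorem omegaPlus_in_Zygmund (α κ : ℝ) (hα1 : 1/2 < α) (hα2 : α < 1)
    (hκ0 : 0 ≤ κ) (hκ : κ < α - 1/2) :
    ∫⁻ x : E2, ENNReal.ofReal (Apa 2 κ (omegaPlus α x)) < ⊤ :=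
  omegaPlus_in_Zygmund_general α κ hκ0 hκ
end

section
/- Let 1/2 < α < 1 and let x₁ > 0. Then ∫_{B⁺(0;1/3)} [y₂ / (2π((x₁ − y₁)² + y₂²))] · ω^α_+(y) dy = (1/(2π x₁)) ∫₀^{1/3} [log((r + x₁)/|r − x₁|)] / (log(1/r))^α dr; that is, on the positive horizontal axis the first component of K ∗ ω^α_+ is given by this one-dimensional integral. -/
open MeasureTheory Real Metric Filter
open scoped ENNReal Topology

/-! In polar coordinates `y = (r cos θ, r sin θ)` the weight `ω^α_+` depends only on `r` (on the
upper half-disk, i.e. for `r < 1/3`, `0 < θ < π`), and the angular integral of the kernel is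
elementary: `r sin θ / (x₁² - 2 x₁ r cos θ + r²)` is the `θ`-derivative of
`log (x₁² - 2 x₁ r cos θ + r²) / (2 x₁)`, so its integral over `(0, π)` is
`log ((r + x₁) / |r - x₁|) / x₁`. All integrands are nonnegative, so both sides are `toReal` of
lower Lebesgue integrals and Tonelli's theorem applies without any integrability check. -/

open Set

theorem lintegral_euclideanSpace_fin_two_eq_polar {g : EuclideanSpace ℝ (Fin 2) → ℝ≥0∞}
    (hg : Measurable g) :
    ∫⁻ y, g y =
      ∫⁻ r in Ioi 0, ∫⁻ θ in Ioo (-π) π, ENNReal.ofReal r * g !₂[r * cos θ, r * sin θ] := by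
  let e : EuclideanSpace ℝ (Fin 2) ≃ᵐ ℝ × ℝ :=
    (MeasurableEquiv.toLp 2 (Fin 2 → ℝ)).symm.trans MeasurableEquiv.finTwoArrow
  have he : MeasurePreserving e := (volume_preserving_finTwoArrow ℝ).comp
    (EuclideanSpace.volume_preserving_symm_measurableEquiv_toLp (Fin 2))
  have hpolar : ∀ p : ℝ × ℝ, e.symm (polarCoord.symm p) = !₂[p.1 * cos p.2, p.1 * sin p.2] :=
    fun _ => rfl
  rw [← he.symm.lintegral_comp_emb e.symm.measurableEmbedding, ← lintegral_comp_polarCoord_symm,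
    polarCoord_target, Measure.volume_eq_prod, ← Measure.prod_restrict, lintegral_prod]
  · simp only [hpolar, smul_eq_mul]
  · refine (measurable_fst.ennreal_ofReal.smul (hg.comp ?_)).aemeasurable
    fun_prop

theorem norm_polar_fin_two {r : ℝ} (hr : 0 ≤ r) (θ : ℝ) : ‖!₂[r * cos θ, r * sin θ]‖ = r := by
  rw [EuclideanSpace.norm_eq, Fin.sum_univ_two]
  simp [mul_pow, ← mul_add, sqrt_sq hr]

theorem sq_sub_two_mul_mul_cos_add_sq_pos {x r : ℝ} (hxr : 0 ≤ x * r) (hrx : r ≠ x) (θ : ℝ) :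
    0 < x ^ 2 - 2 * x * r * cos θ + r ^ 2 := by
  have hsq : 0 < (x - r) ^ 2 := by positivity [sub_ne_zero.mpr hrx.symm]
  nlinarith [cos_le_one θ]

theorem integral_mul_sin_div_sq_sub_two_mul_mul_cos_add_sq {x r : ℝ} (hx : 0 < x) (hr : 0 ≤ r)
    (hrx : r ≠ x) :
    ∫ θ in 0..π, r * sin θ / (x ^ 2 - 2 * x * r * cos θ + r ^ 2) = log ((r + x) / |r - x|) / x := by
  have hD := sq_sub_two_mul_mul_cos_add_sq_pos (mul_nonneg hx.le hr) hrx
  have hderiv : ∀ θ, HasDerivAt (fun θ => log (x ^ 2 - 2 * x * r * cos θ + r ^ 2) / (2 * x))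
      (r * sin θ / (x ^ 2 - 2 * x * r * cos θ + r ^ 2)) θ := by
    intro θ
    refine (((((hasDerivAt_cos θ).const_mul (2 * x * r)).const_sub (x ^ 2)).add_const
      (r ^ 2)).log (hD θ).ne').div_const (2 * x) |>.congr_deriv ?_
    field_simp
  have hcont : Continuous fun θ => r * sin θ / (x ^ 2 - 2 * x * r * cos θ + r ^ 2) :=
    .div (by fun_prop) (by fun_prop) fun θ => (hD θ).ne'
  rw [intervalIntegral.integral_eq_sub_of_hasDerivAt (fun θ _ => hderiv θ)
    (hcont.intervalIntegrable _ _), cos_pi, cos_zero,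
    show x ^ 2 - 2 * x * r * -1 + r ^ 2 = (r + x) ^ 2 by ring,
    show x ^ 2 - 2 * x * r * 1 + r ^ 2 = |r - x| ^ 2 by rw [sq_abs]; ring,
    log_pow, log_pow, log_div (by positivity) (by positivity [sub_ne_zero.mpr hrx])]
  push_cast
  field_simp

theorem measurable_omegaPlus (α : ℝ) : Measurable (omegaPlus α) := by
  refine Measurable.ite ?_ (by fun_prop) measurable_const
  exact (measurableSet_lt measurable_norm measurable_const).inter
    (measurableSet_lt measurable_const (by fun_prop : Measurable fun y : E2 => y 1))

theorem omegaPlus_polar (α : ℝ) {r : ℝ} (hr : 0 < r) (θ : ℝ) :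
    omegaPlus α !₂[r * cos θ, r * sin θ] =
      if r < 1/3 ∧ 0 < sin θ then 1 / (r * log (1/r) ^ α) else 0 := by
  have hsin : 0 < r * sin θ ↔ 0 < sin θ := mul_pos_iff_of_pos_left hr
  simp only [omegaPlus, norm_polar_fin_two hr.le, Matrix.cons_val_one,
    Matrix.cons_val_zero, hsin]
  split_ifs with h
  · rw [one_div r, log_inv, abs_of_neg (log_neg hr (by linarith [h.1]))]
  · rfl

/-- `K₁(x - y) ω^α_+(y)` at `x = (x₁, 0)`. -/
noncomputable def u1Integrand (α x1 : ℝ) (y : E2) : ℝ :=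
  y 1 / (2 * π * ((x1 - y 0) ^ 2 + y 1 ^ 2)) * omegaPlus α y

theorem measurable_u1Integrand (α x1 : ℝ) : Measurable (u1Integrand α x1) :=
  .mul (by fun_prop) (measurable_omegaPlus α)

theorem u1Integrand_nonneg (α x1 : ℝ) (y : E2) : 0 ≤ u1Integrand α x1 y := by
  unfold u1Integrand omegaPlus
  split_ifs with h
  · have := h.2
    positivity
  · rw [mul_zero]

theorem mul_u1Integrand_polar (α x1 : ℝ) {r : ℝ} (hr : 0 < r) (θ : ℝ) :
    r * u1Integrand α x1 !₂[r * cos θ, r * sin θ] =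
      if r < 1/3 ∧ 0 < sin θ then
        r * sin θ / (x1 ^ 2 - 2 * x1 * r * cos θ + r ^ 2) / (2 * π * log (1/r) ^ α)
      else 0 := by
  rw [u1Integrand, omegaPlus_polar α hr]
  split_ifs with h
  · have hlog : 0 < log (1/r) := log_pos (one_lt_one_div hr (by linarith [h.1]))
    have hD : (x1 - r * cos θ) ^ 2 + (r * sin θ) ^ 2 = x1 ^ 2 - 2 * x1 * r * cos θ + r ^ 2 := by
      linear_combination r ^ 2 * sin_sq_add_cos_sq θ
    have hsin := mul_pos hr h.2
    simp only [Matrix.cons_val_one, Matrix.cons_val_zero, hD]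
    field_simp
  · rw [mul_zero, mul_zero]

theorem sin_pos_iff_mem_Ioo {θ : ℝ} (hθ : θ ∈ Ioo (-π) π) : 0 < sin θ ↔ θ ∈ Ioo 0 π := by
  refine ⟨fun h => ⟨?_, hθ.2⟩, sin_pos_of_mem_Ioo⟩
  by_contra! hθ0
  exact (sin_nonpos_of_nonpos_of_neg_pi_le hθ0 hθ.1.le).not_gt h

theorem lintegral_angle_u1Integrand_polar (α : ℝ) {x1 r : ℝ} (hx1 : 0 < x1) (hr : 0 < r)
    (hrx : r ≠ x1) :
    ∫⁻ θ in Ioo (-π) π,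
        ENNReal.ofReal r * ENNReal.ofReal (u1Integrand α x1 !₂[r * cos θ, r * sin θ]) =
      (Iio (1/3)).indicator
          (fun r => ENNReal.ofReal (1 / (2 * π * x1) * (log ((r + x1) / |r - x1|) / log (1/r) ^ α)))
          r := by
  set G : ℝ → ℝ := fun θ => r * sin θ / (x1 ^ 2 - 2 * x1 * r * cos θ + r ^ 2)
  have hpolar (θ : ℝ) :
      ENNReal.ofReal r * ENNReal.ofReal (u1Integrand α x1 !₂[r * cos θ, r * sin θ]) =
        if r < 1/3 ∧ 0 < sin θ then ENNReal.ofReal (G θ / (2 * π * log (1/r) ^ α)) else 0 := by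
    rw [← ENNReal.ofReal_mul hr.le, mul_u1Integrand_polar α x1 hr]
    split_ifs <;> simp [G]
  rw [indicator_apply]
  split_ifs with h13
  · have hD := sq_sub_two_mul_mul_cos_add_sq_pos (mul_nonneg hx1.le hr.le) hrx
    have hlog : 0 < log (1/r) := log_pos (one_lt_one_div hr (by linarith [mem_Iio.mp h13]))
    have hG : Continuous G := .div (by fun_prop) (by fun_prop) fun θ => (hD θ).ne'
    calc _ = ∫⁻ θ in Ioo (-π) π,
            (Ioo 0 π).indicator (fun θ => ENNReal.ofReal (G θ / (2 * π * log (1/r) ^ α))) θ := by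
          refine setLIntegral_congr_fun measurableSet_Ioo fun θ hθ => ?_
          simp only [hpolar, mem_Iio.mp h13, true_and, sin_pos_iff_mem_Ioo hθ, indicator_apply]
      _ = ∫⁻ θ in Ioo 0 π, ENNReal.ofReal (G θ / (2 * π * log (1/r) ^ α)) := by
          rw [lintegral_indicator measurableSet_Ioo, Measure.restrict_restrict measurableSet_Ioo,
            inter_eq_self_of_subset_left (Ioo_subset_Ioo_left (by linarith [pi_pos]))]
      _ = ENNReal.ofReal (∫ θ in 0..π, G θ / (2 * π * log (1/r) ^ α)) := by
          rw [intervalIntegral.integral_of_le pi_pos.le, integral_Ioc_eq_integral_Ioo]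
          refine (ofReal_integral_eq_lintegral_ofReal
            ((hG.div_const _).integrableOn_Icc.mono_set Ioo_subset_Icc_self) ?_).symm
          filter_upwards [ae_restrict_mem measurableSet_Ioo] with θ hθ
          have := sin_pos_of_mem_Ioo hθ
          have := hD θ
          positivity
      _ = _ := by
          rw [intervalIntegral.integral_div,
            integral_mul_sin_div_sq_sub_two_mul_mul_cos_add_sq hx1 hr.le hrx]
          congr 1
          field_simp
  · rw [lintegral_congr fun θ => by rw [hpolar, if_neg fun h => h13 h.1], lintegral_zero]

theorem log_div_abs_sub_nonneg {r x : ℝ} (hr : 0 ≤ r) (hx : 0 ≤ x) :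
    0 ≤ log ((r + x) / |r - x|) := by
  rcases eq_or_ne r x with rfl | hrx
  · simp
  · exact log_nonneg ((one_le_div (by positivity [sub_ne_zero.mpr hrx])).mpr
      (abs_sub_le_iff.mpr ⟨by linarith, by linarith⟩))

theorem u1_on_axis_general (α : ℝ) (x1 : ℝ) (hx1 : 0 < x1) :
    ∫ y in {y : E2 | ‖y‖ < 1/3 ∧ 0 < y 1},
        y 1 / (2 * Real.pi * ((x1 - y 0) ^ 2 + y 1 ^ 2)) * omegaPlus α y =
      (1 / (2 * Real.pi * x1)) *
        ∫ r in (0:ℝ)..(1/3), Real.log ((r + x1) / |r - x1|) / Real.log (1/r) ^ α := by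
  set ρ : ℝ → ℝ := fun r => 1 / (2 * π * x1) * (log ((r + x1) / |r - x1|) / log (1/r) ^ α)
  have hρ : 0 ≤ᵐ[volume.restrict (Ioo 0 (1/3))] ρ := by
    filter_upwards [ae_restrict_mem measurableSet_Ioo] with r hr
    have := log_pos (one_lt_one_div hr.1 (by linarith [hr.2]))
    have := log_div_abs_sub_nonneg hr.1.le hx1.le
    positivity
  have hae : ∀ᵐ r ∂volume.restrict (Ioi 0), r ≠ x1 := ae_restrict_of_ae (volume.ae_ne x1)
  calc _ = ∫ y, u1Integrand α x1 y :=
        setIntegral_eq_integral_of_forall_compl_eq_zero fun y hy =>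
          mul_eq_zero_of_right _ (if_neg hy)
    _ = (∫⁻ y, ENNReal.ofReal (u1Integrand α x1 y)).toReal :=
        integral_eq_lintegral_of_nonneg_ae (.of_forall (u1Integrand_nonneg α x1))
          (measurable_u1Integrand α x1).aestronglyMeasurable
    _ = (∫⁻ r in Ioi 0, (Iio (1/3)).indicator (fun r => ENNReal.ofReal (ρ r)) r).toReal := by
        rw [lintegral_euclideanSpace_fin_two_eq_polar (measurable_u1Integrand α x1).ennreal_ofReal]
        congr 1
        refine lintegral_congr_ae ?_
        filter_upwards [hae, ae_restrict_mem measurableSet_Ioi] with r hrx hr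
        exact lintegral_angle_u1Integrand_polar α hx1 hr hrx
    _ = (∫⁻ r in Ioo 0 (1/3), ENNReal.ofReal (ρ r)).toReal := by
        rw [lintegral_indicator measurableSet_Iio, Measure.restrict_restrict measurableSet_Iio,
          Iio_inter_Ioi]
    _ = ∫ r in (0:ℝ)..(1/3), ρ r := by
        rw [intervalIntegral.integral_of_le (by norm_num), integral_Ioc_eq_integral_Ioo,
          integral_eq_lintegral_of_nonneg_ae hρ (by fun_prop)]
    _ = _ := intervalIntegral.integral_const_mul _ _

/-- on the positive horizontal axis, the first component of `K ∗ ω^α_+`,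
namely `∫_{B⁺(0;1/3)} y₂/(2π((x₁-y₁)²+y₂²)) ω^α_+(y) dy`, equals
`(1/(2π x₁)) ∫₀^{1/3} log((r+x₁)/|r-x₁|) / (log(1/r))^α dr`. -/
theorem u1_on_axis (α : ℝ) (hα1 : 1/2 < α) (hα2 : α < 1) (x1 : ℝ) (hx1 : 0 < x1) :
    ∫ y in {y : E2 | ‖y‖ < 1/3 ∧ 0 < y 1},
        y 1 / (2 * Real.pi * ((x1 - y 0) ^ 2 + y 1 ^ 2)) * omegaPlus α y =
      (1 / (2 * Real.pi * x1)) *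
        ∫ r in (0:ℝ)..(1/3), Real.log ((r + x1) / |r - x1|) / Real.log (1/r) ^ α :=
  u1_on_axis_general α x1 hx1
end

section
/- Let 1/2 < α < 1. There exists a constant C > 0 such that for every 0 < x₁ ≤ 1/36, ∫₀^{1/3} [log((r + x₁)/|r − x₁|)] / (log(1/r))^α dr ≥ C x₁ (log(1/x₁))^{1−α}. -/
open MeasureTheory Real Metric Filter
open scoped ENNReal Topology

/-! On `[2x₁, 1/3]` the numerator satisfies `log ((r + x₁) / (r - x₁)) ≥ 2x₁ / (r + x₁) ≥ x₁ / r`,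
and the integrand is nonnegative on the rest of `[0, 1/3]`; so the integral is at least
`x₁ ∫_{2x₁}^{1/3} dr / (r log(1/r)^α) = x₁ (log(1/(2x₁))^(1-α) - (log 3)^(1-α)) / (1 - α)`.
Since `x₁ ≤ 1/36`, `log(1/(2x₁))` is at least `2 log 3` and at least `log(1/x₁) / 2`, which gives
the bound with `C = (1 - 2^(α-1)) 2^(α-1) / (1 - α)`.
The integrand is integrable because its singularity at `x₁` is logarithmic and
`log(1/r)^α ≥ 1` for `r ≤ 1/e`; without this the integral would be the junk value `0`. -/

noncomputable def axisIntegrand (α c r : ℝ) : ℝ :=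
  log ((r + c) / |r - c|) / log (1 / r) ^ α

lemma abs_log_div_le (x y : ℝ) : |log (x / y)| ≤ |log x| + |log y| := by
  rcases eq_or_ne x 0 with rfl | hx
  · simp
  rcases eq_or_ne y 0 with rfl | hy
  · simp
  rw [Real.log_div hx hy]
  exact abs_sub _ _

lemma log_one_div_nonneg {r : ℝ} (hr0 : 0 ≤ r) (hr1 : r ≤ 1) : 0 ≤ log (1 / r) := by
  rw [one_div, Real.log_inv]
  exact neg_nonneg.2 (Real.log_nonpos hr0 hr1)

lemma one_le_log_one_div {r : ℝ} (hr0 : 0 < r) (hr : r ≤ exp (-1)) : 1 ≤ log (1 / r) := by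
  rwa [Real.le_log_iff_exp_le (by positivity), le_one_div (exp_pos 1) hr0, one_div, ← exp_neg]

lemma axisIntegrand_nonneg (α : ℝ) {c r : ℝ} (hc : 0 ≤ c) (hr0 : 0 ≤ r) (hr1 : r ≤ 1) :
    0 ≤ axisIntegrand α c r := by
  refine div_nonneg ?_ (rpow_nonneg (log_one_div_nonneg hr0 hr1) α)
  rcases eq_or_ne r c with rfl | hrc
  · simp
  have habs : 0 < |r - c| := abs_pos.2 (sub_ne_zero.2 hrc)
  refine Real.log_nonneg ((one_le_div habs).2 (abs_le.2 ⟨?_, ?_⟩)) <;> linarith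

lemma abs_axisIntegrand_le {α c r : ℝ} (hα : 0 ≤ α) (hr0 : 0 < r) (hr : r ≤ exp (-1)) :
    |axisIntegrand α c r| ≤ |log (r + c)| + |log (r - c)| := by
  have hden : 1 ≤ log (1 / r) ^ α := one_le_rpow (one_le_log_one_div hr0 hr) hα
  calc |axisIntegrand α c r| ≤ |log ((r + c) / |r - c|)| := by
        rw [axisIntegrand, abs_div, abs_of_pos (zero_lt_one.trans_le hden)]
        exact div_le_self (abs_nonneg _) hden
    _ ≤ |log (r + c)| + |log (r - c)| := by
        simpa only [Real.log_abs] using abs_log_div_le (r + c) |r - c|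

lemma intervalIntegrable_abs_log_add (c a b : ℝ) :
    IntervalIntegrable (fun r => |log (r + c)|) volume a b := by
  simpa using
    (intervalIntegral.intervalIntegrable_log' (a := a + c) (b := b + c)).abs.comp_add_right c

lemma intervalIntegrable_axisIntegrand {α : ℝ} (hα : 0 ≤ α) (c : ℝ) {b : ℝ} (hb0 : 0 ≤ b)
    (hb : b ≤ exp (-1)) : IntervalIntegrable (axisIntegrand α c) volume 0 b := by
  refine ((intervalIntegrable_abs_log_add c 0 b).add
    (by simpa [sub_eq_add_neg] using intervalIntegrable_abs_log_add (-c) 0 b)).mono_fun'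
    (by unfold axisIntegrand; fun_prop : Measurable (axisIntegrand α c)).aestronglyMeasurable ?_
  filter_upwards [ae_restrict_mem measurableSet_uIoc] with r hr
  rw [Set.uIoc_of_le hb0] at hr
  exact abs_axisIntegrand_le hα hr.1 (hr.2.trans hb)

lemma continuousOn_inv_mul_log_one_div_rpow (α : ℝ) :
    ContinuousOn (fun r => (r * log (1 / r) ^ α)⁻¹) (Set.Ioo 0 1) := fun r ⟨hr0, hr1⟩ => by
  have hlog : 0 < log (1 / r) := Real.log_pos ((one_lt_div hr0).2 hr1)
  have hden : ContinuousAt (fun x => x * log (1 / x) ^ α) r :=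
    continuousAt_id.mul (((continuousAt_const.div continuousAt_id hr0.ne').log
      (one_div_pos.2 hr0).ne').rpow_const (Or.inl hlog.ne'))
  exact (hden.inv₀ (mul_pos hr0 (rpow_pos_of_pos hlog α)).ne').continuousWithinAt

lemma intervalIntegrable_inv_mul_log_one_div_rpow (α : ℝ) {a b : ℝ} (ha : 0 < a) (hab : a ≤ b)
    (hb : b < 1) : IntervalIntegrable (fun r => (r * log (1 / r) ^ α)⁻¹) volume a b :=
  ((continuousOn_inv_mul_log_one_div_rpow α).mono (by
    rw [Set.uIcc_of_le hab]
    exact Set.Icc_subset_Ioo ha hb)).intervalIntegrable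

lemma hasDerivAt_log_one_div_rpow_div {α r : ℝ} (hα : α ≠ 1) (hr0 : 0 < r) (hr1 : r < 1) :
    HasDerivAt (fun x => log (1 / x) ^ (1 - α) / (α - 1)) (r * log (1 / r) ^ α)⁻¹ r := by
  have hlog : 0 < log (1 / r) := Real.log_pos ((one_lt_div hr0).2 hr1)
  have hinner : HasDerivAt (fun x => log (1 / x)) (-r⁻¹) r := by
    simp only [one_div, Real.log_inv]
    exact (Real.hasDerivAt_log hr0.ne').neg
  refine ((hinner.rpow_const (p := 1 - α) (Or.inl hlog.ne')).div_const (α - 1)).congr_deriv ?_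
  rw [show 1 - α - 1 = -α by ring, rpow_neg hlog.le]
  field_simp [sub_ne_zero.2 hα]
  ring

lemma integral_inv_mul_log_one_div_rpow {α : ℝ} (hα : α ≠ 1) {a b : ℝ} (ha : 0 < a) (hab : a ≤ b)
    (hb : b < 1) :
    ∫ r in a..b, (r * log (1 / r) ^ α)⁻¹ =
      (log (1 / a) ^ (1 - α) - log (1 / b) ^ (1 - α)) / (1 - α) := by
  have hmem : ∀ r ∈ Set.uIcc a b, 0 < r ∧ r < 1 := fun r hr => by
    rw [Set.uIcc_of_le hab] at hr
    exact ⟨ha.trans_le hr.1, hr.2.trans_lt hb⟩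
  rw [intervalIntegral.integral_eq_sub_of_hasDerivAt
    (fun r hr => hasDerivAt_log_one_div_rpow_div hα (hmem r hr).1 (hmem r hr).2)
    (intervalIntegrable_inv_mul_log_one_div_rpow α ha hab hb), ← neg_sub α, div_neg]
  ring

lemma div_le_log_add_div_sub {c r : ℝ} (hc : 0 ≤ c) (hcr : c < r) :
    c / r ≤ log ((r + c) / (r - c)) := by
  have hr : 0 < r := hc.trans_lt hcr
  have hsub : 0 < r - c := sub_pos.2 hcr
  calc c / r ≤ 2 * c / (r + c) := by
        rw [div_le_div_iff₀ hr (by linarith)]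
        nlinarith
    _ = 1 - ((r + c) / (r - c))⁻¹ := by field_simp; ring
    _ ≤ log ((r + c) / (r - c)) := one_sub_inv_le_log_of_pos (by positivity)

lemma div_mul_log_rpow_le_axisIntegrand (α : ℝ) {c r : ℝ} (hc : 0 ≤ c) (hcr : c < r) (hr : r ≤ 1) :
    c * (r * log (1 / r) ^ α)⁻¹ ≤ axisIntegrand α c r := by
  rw [axisIntegrand, abs_of_pos (sub_pos.2 hcr), mul_inv, ← mul_assoc, ← div_eq_mul_inv,
    ← div_eq_mul_inv]
  exact div_le_div_of_nonneg_right (div_le_log_add_div_sub hc hcr)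
    (rpow_nonneg (log_one_div_nonneg (hc.trans hcr.le) hr) α)

lemma integral_axisIntegrand_ge {α c a b : ℝ} (hα : 0 ≤ α) (hα1 : α ≠ 1) (hc : 0 ≤ c)
    (hca : c < a) (hab : a ≤ b) (hb : b ≤ exp (-1)) :
    c * (log (1 / a) ^ (1 - α) - log (1 / b) ^ (1 - α)) / (1 - α) ≤
      ∫ r in (0 : ℝ)..b, axisIntegrand α c r := by
  have ha : 0 < a := hc.trans_lt hca
  have hb1 : b < 1 := hb.trans_lt (exp_lt_one_iff.2 (by norm_num))
  have hint : IntervalIntegrable (axisIntegrand α c) volume 0 b :=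
    intervalIntegrable_axisIntegrand hα c (ha.le.trans hab) hb
  have hint' : IntervalIntegrable (axisIntegrand α c) volume a b := hint.mono_set (by
    rw [Set.uIcc_of_le hab, Set.uIcc_of_le (ha.le.trans hab)]
    exact Set.Icc_subset_Icc ha.le le_rfl)
  calc c * (log (1 / a) ^ (1 - α) - log (1 / b) ^ (1 - α)) / (1 - α)
      = ∫ r in a..b, c * (r * log (1 / r) ^ α)⁻¹ := by
        rw [intervalIntegral.integral_const_mul,
          integral_inv_mul_log_one_div_rpow hα1 ha hab hb1, mul_div_assoc]
    _ ≤ ∫ r in a..b, axisIntegrand α c r :=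
        intervalIntegral.integral_mono_on hab
          ((intervalIntegrable_inv_mul_log_one_div_rpow α ha hab hb1).const_mul c) hint'
          fun r hr => div_mul_log_rpow_le_axisIntegrand α hc (hca.trans_le hr.1) (hr.2.trans hb1.le)
    _ ≤ ∫ r in (0 : ℝ)..b, axisIntegrand α c r :=
        intervalIntegral.integral_mono_interval ha.le hab le_rfl
          (ae_restrict_of_forall_mem measurableSet_Ioc fun r hr =>
            axisIntegrand_nonneg α hc hr.1.le (hr.2.trans hb1.le)) hint

lemma mul_rpow_le_rpow_sub_rpow {t b A L : ℝ} (ht : 0 ≤ t) (hb : 0 ≤ b) (hbA : 2 * b ≤ A)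
    (hL : 0 ≤ L) (hLA : L ≤ 2 * A) :
    (1 - 2 ^ (-t)) * 2 ^ (-t) * L ^ t ≤ A ^ t - b ^ t := by
  have hhalf : ∀ x : ℝ, 0 ≤ x → (x / 2) ^ t = 2 ^ (-t) * x ^ t := fun x hx => by
    rw [div_rpow hx zero_le_two, rpow_neg zero_le_two]
    ring
  have hbA' : b ^ t ≤ 2 ^ (-t) * A ^ t := hhalf A (by linarith) ▸ rpow_le_rpow hb (by linarith) ht
  have hLA' : 2 ^ (-t) * L ^ t ≤ A ^ t :=
    hhalf L hL ▸ rpow_le_rpow (by positivity) (by linarith) ht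
  have hs : (2 : ℝ) ^ (-t) ≤ 1 := rpow_le_one_of_one_le_of_nonpos one_le_two (neg_nonpos.2 ht)
  nlinarith [mul_le_mul_of_nonneg_left hLA' (sub_nonneg.2 hs)]

lemma two_mul_log_three_le_log_one_div_two_mul {x : ℝ} (hx0 : 0 < x) (hx : x ≤ 1 / 18) :
    2 * log 3 ≤ log (1 / (2 * x)) := by
  rw [← Real.log_rpow three_pos]
  exact Real.log_le_log (by positivity) (by rw [le_div_iff₀ (by positivity)]; norm_num; linarith)

lemma log_one_div_le_two_mul_log_one_div_two_mul {x : ℝ} (hx0 : 0 < x) (hx : x ≤ 1 / 4) :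
    log (1 / x) ≤ 2 * log (1 / (2 * x)) := by
  rw [← Real.log_rpow (by positivity)]
  refine Real.log_le_log (by positivity) ?_
  rw [div_rpow zero_le_one (by positivity), one_rpow, div_le_div_iff₀ hx0 (by positivity)]
  norm_num
  nlinarith

/-- for `1/2 < α < 1` there is `C > 0` such that for all `0 < x₁ ≤ 1/36`,
`∫₀^{1/3} log((r+x₁)/|r-x₁|) / (log(1/r))^α dr ≥ C x₁ (log(1/x₁))^{1-α}`. -/
theorem axis_integral_lower_bound (α : ℝ) (hα1 : 1/2 < α) (hα2 : α < 1) :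
    ∃ C : ℝ, 0 < C ∧ ∀ x1 : ℝ, 0 < x1 → x1 ≤ 1/36 →
      C * x1 * Real.log (1/x1) ^ (1 - α) ≤
        ∫ r in (0:ℝ)..(1/3), Real.log ((r + x1) / |r - x1|) / Real.log (1/r) ^ α := by
  have ht : 0 < 1 - α := by linarith
  have hs : (2 : ℝ) ^ (-(1 - α)) < 1 := rpow_lt_one_of_one_lt_of_neg one_lt_two (by linarith)
  refine ⟨(1 - 2 ^ (-(1 - α))) * 2 ^ (-(1 - α)) / (1 - α), by have := sub_pos.2 hs; positivity,
    fun x hx0 hx => ?_⟩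
  have hcore := integral_axisIntegrand_ge (by linarith) hα2.ne hx0.le (by linarith : x < 2 * x)
    (by linarith : 2 * x ≤ 1 / 3) ((by norm_num : (1 / 3 : ℝ) ≤ 0.36787944116).trans
      exp_neg_one_gt_d9.le)
  rw [one_div_one_div] at hcore
  have harith := mul_rpow_le_rpow_sub_rpow ht.le (log_nonneg (by norm_num))
    (two_mul_log_three_le_log_one_div_two_mul hx0 (by linarith))
    (log_one_div_nonneg hx0.le (by linarith))
    (log_one_div_le_two_mul_log_one_div_two_mul hx0 (by linarith))
  calc _ = x * ((1 - 2 ^ (-(1 - α))) * 2 ^ (-(1 - α)) * log (1 / x) ^ (1 - α)) / (1 - α) := by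
        ring
    _ ≤ x * (log (1 / (2 * x)) ^ (1 - α) - log 3 ^ (1 - α)) / (1 - α) := by gcongr
    _ ≤ _ := hcore
end

section
/- Fix 1/2 < α ≤ 2/3 and let 0 ≤ κ < α − 1/2. For n ∈ ℕ, n ≥ 2, define ω^n_+ on ℝ² by ω^n_+(x) = n/(log n)^α if x ∈ B⁺(0;1/n) and ω^n_+(x) = ω^α_+(x) otherwise. Then ω^n_+ → ω^α_+ in the Luxemburg norm of L²(log L)^κ, i.e. inf{ k > 0 : ∫_{ℝ²} A_{2,κ}(|ω^α_+(x) − ω^n_+(x)|/k) dx ≤ 1 } → 0 as n → ∞. -/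
open MeasureTheory Real Metric Filter
open scoped ENNReal Topology

/-- The truncation `ω^n_+`: equal to `n/(log n)^α` on `B⁺(0;1/n)` and to `ω^α_+`
elsewhere. -/
noncomputable def omegaN (α : ℝ) (n : ℕ) (x : E2) : ℝ :=
  if ‖x‖ < 1/(n:ℝ) ∧ 0 < x 1 then (n:ℝ) / Real.log n ^ α else omegaPlus α x

/-!
Off the origin `ω^n_+(x) = ω^α_+(x)` as soon as `1/n ≤ |x|`, so the difference tends to `0`
almost everywhere. Once `log n ≥ α`, the function `t ↦ e^{-t} t^α` is decreasing on
`[log n, ∞)`; with `t = -log |x|` this says that the plateau value `n/(log n)^α` stays below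
`ω^α_+` on `B⁺(0;1/n)`, hence `|ω^α_+ - ω^n_+| ≤ ω^α_+`. Since `log (2 + s) ≲ |log r|` for
`s ≲ 1/r`, we get `A_{2,κ}(ω^α_+/k) ≲ r⁻² |log r|^{2(κ-α)}` at radius `r`, which is integrable
against `r dr` near `0` exactly when `κ < α - 1/2`. Dominated convergence then gives
`∫ A_{2,κ}(|ω^α_+ - ω^n_+|/k) → 0` for every `k > 0`, which is convergence of the Luxemburg norms.
-/

open Set

theorem exp_neg_mul_rpow_le {α s t : ℝ} (hα : 0 < α) (hαs : α ≤ s) (hst : s ≤ t) :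
    exp (-t) * t ^ α ≤ exp (-s) * s ^ α := by
  have hs : 0 < s := hα.trans_le hαs
  have hts : 0 < t / s := div_pos (hs.trans_le hst) hs
  have hlog : α * log (t / s) ≤ t - s := calc
    α * log (t / s) ≤ α * ((t - s) / s) := by
      gcongr
      rw [sub_div, div_self hs.ne']
      exact log_le_sub_one_of_pos hts
    _ = α / s * (t - s) := by ring
    _ ≤ 1 * (t - s) := by gcongr; exact (div_le_one hs).2 hαs
    _ = t - s := one_mul _
  have hpow : t ^ α = s ^ α * exp (α * log (t / s)) := by
    rw [mul_comm α, ← rpow_def_of_pos hts, ← mul_rpow hs.le hts.le, mul_div_cancel₀ _ hs.ne']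
  calc exp (-t) * t ^ α = exp (-t) * s ^ α * exp (α * log (t / s)) := by rw [hpow, mul_assoc]
    _ ≤ exp (-t) * s ^ α * exp (t - s) := by gcongr
    _ = exp (-s) * s ^ α := by rw [mul_right_comm, ← exp_add]; ring_nf

theorem div_log_rpow_le {α c r : ℝ} (hα : 0 < α) (hαc : α ≤ log c) (hr : 0 < r)
    (hrc : r < c⁻¹) : c / log c ^ α ≤ 1 / (r * |log r| ^ α) := by
  have hc : 0 < c := inv_pos.1 (hr.trans hrc)
  have hcr : log c < -log r := by
    rw [← log_inv]; exact log_lt_log hc ((lt_inv_comm₀ hr hc).1 hrc)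
  have key := exp_neg_mul_rpow_le hα hαc hcr.le
  rw [neg_neg, exp_log hr, exp_neg, exp_log hc] at key
  have hlogc : 0 < log c := hα.trans_le hαc
  have hlogr : 0 < -log r := hlogc.trans hcr
  rw [abs_of_neg (neg_pos.1 hlogr), div_le_div_iff₀ (by positivity) (by positivity), one_mul]
  calc c * (r * (-log r) ^ α) ≤ c * (c⁻¹ * log c ^ α) := by gcongr
    _ = log c ^ α := by field_simp

theorem one_le_neg_log_of_lt_one_third {r : ℝ} (hr0 : 0 < r) (hr : r < 1/3) : 1 ≤ -log r := by
  have h3 : 3 < r⁻¹ := by rw [lt_inv_comm₀ (by norm_num) hr0]; simpa using hr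
  rw [← log_inv, le_log_iff_exp_le (by positivity)]
  linarith [exp_one_lt_d9]

theorem log_two_add_le {k r s : ℝ} (hk : 0 < k) (hr0 : 0 < r) (hL : 1 ≤ -log r) (hs0 : 0 ≤ s)
    (hs : s ≤ 1 / (r * k)) : log (2 + s) ≤ (log (2 + 1/k) + 1) * -log r := by
  have hr1 : r ≤ 1 := by
    by_contra! h
    linarith [log_pos h]
  have h2s : 2 + s ≤ (2 + 1/k) / r := calc
    2 + s ≤ 2 / r + 1 / (r * k) := by gcongr; exact le_div_self zero_le_two hr0 hr1
    _ = (2 + 1/k) / r := by field_simp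
  have hk0 : 0 ≤ log (2 + 1/k) := log_nonneg (by linarith [one_div_pos.2 hk])
  calc log (2 + s) ≤ log ((2 + 1/k) / r) := log_le_log (by linarith) h2s
    _ = log (2 + 1/k) + -log r := by rw [log_div (by positivity) hr0.ne']; ring
    _ ≤ (log (2 + 1/k) + 1) * -log r := by nlinarith

theorem integrableOn_neg_log_rpow_div {β c : ℝ} (hβ : β < -1) (hc : c < 1) :
    IntegrableOn (fun r => (-log r) ^ β / r) (Ioo 0 c) := by
  rcases le_or_gt c 0 with hc0 | hc0
  · simp [Ioo_eq_empty_of_le hc0]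
  have himage : (fun t => exp (-t)) '' Ioi (-log c) = Ioo 0 c := by
    rw [show (fun t => exp (-t)) = exp ∘ Neg.neg from rfl, image_comp, image_neg_Ioi, neg_neg,
      image_exp_Iio, exp_log hc0]
  have hderiv : ∀ t ∈ Ioi (-log c),
      HasDerivWithinAt (fun t => exp (-t)) (-exp (-t)) (Ioi (-log c)) t := fun t _ =>
    by simpa using ((hasDerivAt_neg t).exp).hasDerivWithinAt
  have hinj : InjOn (fun t => exp (-t)) (Ioi (-log c)) := fun a _ b _ h => by
    simpa using exp_injective h
  rw [← himage, integrableOn_image_iff_integrableOn_abs_deriv_smul measurableSet_Ioi hderiv hinj]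
  have hpos : 0 < -log c := neg_pos.2 (log_neg hc0 hc)
  refine (integrableOn_Ioi_rpow_of_lt hβ hpos).congr_fun (fun t ht => ?_) measurableSet_Ioi
  simp [abs_of_pos (exp_pos _), mul_div_cancel₀ _ (exp_pos _).ne']

theorem Apa_zero {p : ℝ} (hp : p ≠ 0) (a : ℝ) : Apa p a 0 = 0 := by
  simp [Apa, zero_rpow hp]

theorem Apa_nonneg (p a : ℝ) {s : ℝ} (hs : 0 ≤ s) : 0 ≤ Apa p a s := by
  have : 0 ≤ log (2 + s) := log_nonneg (by linarith)
  unfold Apa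
  positivity

theorem Apa_le_Apa {p a s t : ℝ} (hp : 0 ≤ p) (ha : 0 ≤ a) (hs : 0 ≤ s) (hst : s ≤ t) :
    Apa p a s ≤ Apa p a t := by
  have hlog : log (2 + s) ≤ log (2 + t) := log_le_log (by linarith) (by linarith)
  have hlog0 : 0 ≤ log (2 + s) := log_nonneg (by linarith)
  unfold Apa
  gcongr
  linarith

theorem measurable_Apa (p a : ℝ) : Measurable (Apa p a) := by
  unfold Apa; fun_prop

theorem measurable_omegaN (α : ℝ) (n : ℕ) : Measurable (omegaN α n) := by
  unfold omegaN
  exact Measurable.ite (by measurability) measurable_const (measurable_omegaPlus α)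

theorem omegaPlus_nonneg (α : ℝ) (x : E2) : 0 ≤ omegaPlus α x := by
  unfold omegaPlus; split_ifs <;> positivity

theorem omegaN_nonneg (α : ℝ) (n : ℕ) (x : E2) : 0 ≤ omegaN α n x := by
  unfold omegaN
  split_ifs
  · have := log_natCast_nonneg n; positivity
  · exact omegaPlus_nonneg α x

theorem omegaN_le_omegaPlus {α : ℝ} (hα : 0 < α) {n : ℕ} (hn : 3 ≤ n) (hαn : α ≤ log n)
    (x : E2) : omegaN α n x ≤ omegaPlus α x := by
  unfold omegaN
  split_ifs with hx
  · have hx0 : 0 < ‖x‖ := norm_pos_iff.2 (by rintro rfl; simp at hx)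
    have hx3 : ‖x‖ < 1/3 := hx.1.trans_le (by gcongr; exact_mod_cast hn)
    rw [omegaPlus, if_pos ⟨hx3, hx.2⟩]
    exact div_log_rpow_le hα hαn hx0 (by simpa using hx.1)
  · rfl

theorem abs_omegaPlus_sub_omegaN_le {α : ℝ} (hα : 0 < α) {n : ℕ} (hn : 3 ≤ n)
    (hαn : α ≤ log n) (x : E2) : |omegaPlus α x - omegaN α n x| ≤ omegaPlus α x :=
  abs_sub_le_of_nonneg_of_le (omegaPlus_nonneg α x) le_rfl (omegaN_nonneg α n x)
    (omegaN_le_omegaPlus hα hn hαn x)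

theorem omegaN_eventually_eq (α : ℝ) {x : E2} (hx : x ≠ 0) :
    ∀ᶠ n : ℕ in atTop, omegaN α n x = omegaPlus α x := by
  filter_upwards [tendsto_one_div_atTop_nhds_zero_nat.eventually_lt_const (norm_pos_iff.2 hx)]
    with n hn
  exact if_neg fun h => h.1.not_gt hn

noncomputable def omegaRadial (α r : ℝ) : ℝ :=
  if r < 1/3 then 1 / (r * |log r| ^ α) else 0

theorem measurable_omegaRadial (α : ℝ) : Measurable (omegaRadial α) :=
  Measurable.ite measurableSet_Iio (by fun_prop) measurable_const

theorem omegaPlus_le_omegaRadial (α : ℝ) (x : E2) : omegaPlus α x ≤ omegaRadial α ‖x‖ := by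
  unfold omegaPlus omegaRadial
  split_ifs with hx hx3
  · rfl
  · exact absurd hx.1 hx3
  · positivity
  · rfl

theorem mul_Apa_omegaRadial_le {α κ k r : ℝ} (hα : 0 ≤ α) (hκ : 0 ≤ κ) (hk : 0 < k)
    (hr0 : 0 < r) (hr : r < 1/3) :
    r * Apa 2 κ (omegaRadial α r / k) ≤
      ((log (2 + 1/k) + 1) ^ κ / k) ^ 2 * ((-log r) ^ (2 * (κ - α)) / r) := by
  have hL := one_le_neg_log_of_lt_one_third hr0 hr
  set L := -log r
  set C := log (2 + 1/k) + 1
  have hC : 0 < C := add_pos_of_nonneg_of_pos (log_nonneg (by linarith [one_div_pos.2 hk])) one_pos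
  have hLα : 1 ≤ L ^ α := one_le_rpow hL hα
  have hs : omegaRadial α r / k = 1 / (r * L ^ α * k) := by
    rw [omegaRadial, if_pos hr, abs_of_neg (by linarith), div_div]
  have hs_le : 1 / (r * L ^ α * k) ≤ 1 / (r * k) := by
    gcongr
    nlinarith
  have hlog := log_two_add_le hk hr0 hL (by positivity) hs_le
  have hlog0 : 0 ≤ log (2 + 1 / (r * L ^ α * k)) :=
    log_nonneg (by linarith [show 0 < 1 / (r * L ^ α * k) by positivity])
  calc r * Apa 2 κ (omegaRadial α r / k)
      ≤ r * (1 / (r * L ^ α * k) * (C * L) ^ κ) ^ (2:ℝ) := by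
        rw [hs, Apa]
        gcongr
    _ = (C ^ κ / k) ^ 2 * (L ^ (2 * (κ - α)) / r) := by
        rw [rpow_two, mul_rpow hC.le (by positivity), mul_comm 2, rpow_mul (by positivity),
          rpow_sub (by positivity), rpow_two]
        field_simp

theorem integrable_Apa_omegaRadial_norm {α κ k : ℝ} (hκ0 : 0 ≤ κ) (hκ : κ < α - 1/2)
    (hk : 0 < k) : Integrable (fun x : E2 => Apa 2 κ (omegaRadial α ‖x‖ / k)) := by
  have hα : 0 ≤ α := by linarith
  set C := ((log (2 + 1/k) + 1) ^ κ / k) ^ 2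
  have hmajorant : IntegrableOn (fun r => C * ((-log r) ^ (2 * (κ - α)) / r)) (Ioo 0 (1/3)) :=
    (integrableOn_neg_log_rpow_div (by linarith) (by norm_num)).const_mul C
  rw [integrable_fun_norm_addHaar volume (f := fun r => Apa 2 κ (omegaRadial α r / k))]
  simp only [finrank_euclideanSpace_fin, Nat.add_one_sub_one, pow_one, smul_eq_mul]
  refine (hmajorant.integrable_indicator measurableSet_Ioo).integrableOn.mono' ?_ ?_
  · exact (measurable_id.mul ((measurable_Apa 2 κ).comp
      ((measurable_omegaRadial α).div_const k))).aestronglyMeasurable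
  filter_upwards [ae_restrict_mem measurableSet_Ioi] with r (hr : 0 < r)
  have hrad : 0 ≤ omegaRadial α r := by unfold omegaRadial; split_ifs <;> positivity
  rw [Real.norm_of_nonneg (mul_nonneg hr.le (Apa_nonneg _ _ (by positivity)))]
  rcases lt_or_ge r (1/3) with h3 | h3
  · rw [indicator_of_mem (show r ∈ Ioo 0 (1/3) from ⟨hr, h3⟩)]
    exact mul_Apa_omegaRadial_le hα hκ0 hk hr h3
  · rw [indicator_of_notMem (fun h => h3.not_gt h.2), omegaRadial, if_neg h3.not_gt, zero_div,
      Apa_zero two_ne_zero, mul_zero]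

theorem tendsto_lintegral_Apa_abs_omegaPlus_sub_omegaN {α κ k : ℝ} (hκ0 : 0 ≤ κ)
    (hκ : κ < α - 1/2) (hk : 0 < k) :
    Tendsto (fun n : ℕ => ∫⁻ x, ENNReal.ofReal (Apa 2 κ (|omegaPlus α x - omegaN α n x| / k)))
      atTop (𝓝 0) := by
  have hα : 0 < α := by linarith
  have hlarge : ∀ᶠ n : ℕ in atTop, 3 ≤ n ∧ α ≤ log n :=
    (eventually_ge_atTop 3).and
      ((tendsto_log_atTop.comp tendsto_natCast_atTop_atTop).eventually_ge_atTop α)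
  have hdom : ∀ᶠ n : ℕ in atTop, ∀ᵐ x : E2,
      ENNReal.ofReal (Apa 2 κ (|omegaPlus α x - omegaN α n x| / k)) ≤
        ENNReal.ofReal (Apa 2 κ (omegaRadial α ‖x‖ / k)) := by
    filter_upwards [hlarge] with n ⟨hn3, hαn⟩
    refine ae_of_all _ fun x =>
      ENNReal.ofReal_le_ofReal (Apa_le_Apa zero_le_two hκ0 (by positivity) ?_)
    gcongr
    exact (abs_omegaPlus_sub_omegaN_le hα hn3 hαn x).trans (omegaPlus_le_omegaRadial α x)
  have hlim : ∀ᵐ x : E2, Tendsto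
      (fun n : ℕ => ENNReal.ofReal (Apa 2 κ (|omegaPlus α x - omegaN α n x| / k))) atTop (𝓝 0) := by
    filter_upwards [compl_mem_ae_iff.2 (measure_singleton (0 : E2))] with x (hx : x ≠ 0)
    refine tendsto_const_nhds.congr' ?_
    filter_upwards [omegaN_eventually_eq α hx] with n hn
    rw [hn, sub_self, abs_zero, zero_div, Apa_zero two_ne_zero, ENNReal.ofReal_zero]
  simpa using tendsto_lintegral_filter_of_dominated_convergence _
    (Eventually.of_forall fun n => ((measurable_Apa 2 κ).comp
      (((measurable_omegaPlus α).sub (measurable_omegaN α n)).abs.div_const k)).ennreal_ofReal)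
    hdom (integrable_Apa_omegaRadial_norm hκ0 hκ hk).lintegral_lt_top.ne hlim

noncomputable def luxemburgNorm (ρ : ℝ → ℝ≥0∞) : ℝ := sInf {k : ℝ | 0 < k ∧ ρ k ≤ 1}

theorem tendsto_luxemburgNorm_zero {ι : Type*} {l : Filter ι} {ρ : ι → ℝ → ℝ≥0∞}
    (hρ : ∀ k, 0 < k → Tendsto (fun i => ρ i k) l (𝓝 0)) :
    Tendsto (fun i => luxemburgNorm (ρ i)) l (𝓝 0) := by
  refine tendsto_order.2 ⟨fun a ha => Eventually.of_forall fun i =>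
    ha.trans_le (Real.sInf_nonneg fun k hk => hk.1.le), fun a ha => ?_⟩
  filter_upwards [(hρ (a/2) (by linarith)).eventually_le_const zero_lt_one] with i hi
  have hmem : a / 2 ∈ {k : ℝ | 0 < k ∧ ρ i k ≤ 1} := ⟨by linarith, hi⟩
  exact (csInf_le ⟨0, fun k hk => hk.1.le⟩ hmem).trans_lt (by linarith)

theorem truncation_converges_in_Zygmund_general (α κ : ℝ)
    (hκ0 : 0 ≤ κ) (hκ : κ < α - 1/2) :
    Tendsto (fun n : ℕ =>
        sInf {k : ℝ | 0 < k ∧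
          ∫⁻ x, ENNReal.ofReal (Apa 2 κ (|omegaPlus α x - omegaN α n x| / k)) ≤ 1})
      atTop (𝓝 0) :=
  tendsto_luxemburgNorm_zero fun _ hk => tendsto_lintegral_Apa_abs_omegaPlus_sub_omegaN hκ0 hκ hk

/-- for `1/2 < α ≤ 2/3` and `0 ≤ κ < α - 1/2`, the truncations `ω^n_+`
converge to `ω^α_+` in the Luxemburg norm of the Zygmund space `L²(log L)^κ`. -/
theorem truncation_converges_in_Zygmund (α κ : ℝ) (hα1 : 1/2 < α) (hα2 : α ≤ 2/3)
    (hκ0 : 0 ≤ κ) (hκ : κ < α - 1/2) :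
    Tendsto (fun n : ℕ =>
        sInf {k : ℝ | 0 < k ∧
          ∫⁻ x, ENNReal.ofReal (Apa 2 κ (|omegaPlus α x - omegaN α n x| / k)) ≤ 1})
      atTop (𝓝 0) :=
  truncation_converges_in_Zygmund_general α κ hκ0 hκ
end
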